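/- arXiv:1906.05722 — 2 statements merged into one kernel-verified Lean document; each statement's English description precedes it below -/
import Mathlib

section
/- Fix a nonzero frequency k ∈ ℝᵈ and a complex symmetric d×d matrix B. Then min over a ∈ ℂᵈ of ‖ i π (a⊗k + k⊗a) − B ‖² (Frobenius norm squared, with the minimization over all a) equals ‖B‖² − 2|Bk|²/|k|² + |k·Bk|²/|k|⁴. -/
/-! The map `v ↦ v kᵀ + k vᵀ` is linear, so this is a least-squares problem for the Frobenius
inner product. For symmetric `C` and real `k` one has `⟪v kᵀ + k vᵀ, C⟫ = 2 ⟪v, C k⟫`, so `v₀` is a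
minimiser as soon as the residual `v₀ kᵀ + k v₀ᵀ - B` annihilates `k`. This normal equation
`|k|² v₀ + (v₀ ⬝ k) k = B k` is solved by `v₀ = Bk / |k|² - (k ⬝ Bk) k / (2 |k|⁴)`, and Pythagoras
gives the minimum `‖B‖² - ‖v₀ kᵀ + k v₀ᵀ‖²`, where `‖v₀ kᵀ + k v₀ᵀ‖² = 2 ⟪v₀, Bk⟫`.
The factor `iπ` is absorbed into `v`. -/

open Complex Matrix
open scoped InnerProductSpace ComplexConjugate

section LeastSquares

variable {𝕜 V E F : Type*} [RCLike 𝕜] [AddCommGroup V] [NormedAddCommGroup E]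
  [InnerProductSpace 𝕜 E] [FunLike F V E] [AddMonoidHomClass F V E]

theorem isLeast_norm_sub_sq_of_inner_eq_zero (L : F) (b : E) {v₀ : V}
    (h : ∀ w, ⟪L w, L v₀ - b⟫_𝕜 = 0) :
    IsLeast (Set.range fun v => ‖L v - b‖ ^ 2) (‖b‖ ^ 2 - ‖L v₀‖ ^ 2) := by
  have pythagoras (v : V) : ‖L v - b‖ ^ 2 = ‖L (v - v₀)‖ ^ 2 + ‖L v₀ - b‖ ^ 2 := by
    have := norm_add_sq_eq_norm_sq_add_norm_sq_of_inner_eq_zero _ _ (h (v - v₀))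
    rw [map_sub, sub_add_sub_cancel] at this
    simpa only [sq, map_sub] using this
  have hb : ‖b‖ ^ 2 = ‖L v₀‖ ^ 2 + ‖L v₀ - b‖ ^ 2 := by
    simpa using pythagoras 0
  refine ⟨⟨v₀, by linarith⟩, ?_⟩
  rintro _ ⟨v, rfl⟩
  linarith [pythagoras v, sq_nonneg ‖L (v - v₀)‖]

end LeastSquares

section Frobenius

variable {𝕜 m n : Type*} [RCLike 𝕜]

noncomputable def Matrix.toFrobenius : Matrix m n 𝕜 →ₗ[𝕜] EuclideanSpace 𝕜 (m × n) where
  toFun M := WithLp.toLp 2 (Function.uncurry M)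
  map_add' _ _ := rfl
  map_smul' _ _ := rfl

@[simp]
theorem Matrix.toFrobenius_apply (M : Matrix m n 𝕜) (p : m × n) :
    toFrobenius M p = M p.1 p.2 :=
  rfl

variable [Fintype m] [Fintype n]

theorem Matrix.norm_toFrobenius_sq (M : Matrix m n 𝕜) :
    ‖toFrobenius M‖ ^ 2 = ∑ i, ∑ j, ‖M i j‖ ^ 2 := by
  simp [EuclideanSpace.norm_sq_eq, Fintype.sum_prod_type]

theorem Matrix.inner_toFrobenius (M N : Matrix m n 𝕜) :
    ⟪toFrobenius M, toFrobenius N⟫_𝕜 = ∑ i, ∑ j, conj (M i j) * N i j := by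
  simp [PiLp.inner_apply, Fintype.sum_prod_type, mul_comm]

end Frobenius

section SymOuter

variable {R n : Type*}

def Matrix.symOuter [CommSemiring R] (k : n → R) : (n → R) →ₗ[R] Matrix n n R where
  toFun v := vecMulVec v k + vecMulVec k v
  map_add' v w := by rw [add_vecMulVec, vecMulVec_add]; abel
  map_smul' c v := by rw [smul_vecMulVec, vecMulVec_smul, RingHom.id_apply, smul_add]

theorem Matrix.symOuter_apply [CommSemiring R] (k v : n → R) (i j : n) :
    symOuter k v i j = v i * k j + k i * v j :=
  rfl

theorem Matrix.transpose_symOuter [CommSemiring R] (k v : n → R) :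
    (symOuter k v)ᵀ = symOuter k v := by
  simp only [symOuter, LinearMap.coe_mk, AddHom.coe_mk, transpose_add, transpose_vecMulVec,
    add_comm]

variable [Fintype n]

theorem Matrix.symOuter_mulVec_self [CommRing R] (k v : n → R) :
    symOuter k v *ᵥ k = (k ⬝ᵥ k) • v + (v ⬝ᵥ k) • k := by
  ext i
  simp [symOuter, add_mulVec, vecMulVec_mulVec]

theorem Matrix.inner_toFrobenius_symOuter {𝕜 : Type*} [RCLike 𝕜] {k : n → 𝕜} (hk : star k = k)
    (w : n → 𝕜) {C : Matrix n n 𝕜} (hC : Cᵀ = C) :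
    ⟪toFrobenius (symOuter k w), toFrobenius C⟫_𝕜 = 2 * (star w ⬝ᵥ C *ᵥ k) := by
  have hk' (i : n) : conj (k i) = k i := congrFun hk i
  have hC' (i j : n) : C j i = C i j := congr_fun₂ hC i j
  simp only [inner_toFrobenius, symOuter_apply, map_add, map_mul, hk', dotProduct, mulVec,
    Pi.star_apply, RCLike.star_def, Finset.mul_sum, add_mul, Finset.sum_add_distrib, two_mul]
  congr 1
  · exact Finset.sum_congr rfl fun i _ => Finset.sum_congr rfl fun j _ => by ring
  · rw [Finset.sum_comm]
    exact Finset.sum_congr rfl fun i _ => Finset.sum_congr rfl fun j _ => by rw [hC']; ring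

end SymOuter

section Minimization

variable {n : Type*} [Fintype n]

def Matrix.symOuterSolution {K : Type*} [Field K] (k b : n → K) : n → K :=
  (k ⬝ᵥ k)⁻¹ • b - ((k ⬝ᵥ b) / (2 * (k ⬝ᵥ k) ^ 2)) • k

theorem Matrix.symOuter_symOuterSolution_mulVec {K : Type*} [Field K] [NeZero (2 : K)]
    {k : n → K} (hk : k ⬝ᵥ k ≠ 0) (b : n → K) :
    symOuter k (symOuterSolution k b) *ᵥ k = b := by
  have hdot : symOuterSolution k b ⬝ᵥ k = (k ⬝ᵥ b) / (2 * (k ⬝ᵥ k)) := by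
    simp only [symOuterSolution, sub_dotProduct, smul_dotProduct, dotProduct_comm b k, smul_eq_mul]
    field_simp
    ring
  have hcoeff : k ⬝ᵥ k * ((k ⬝ᵥ b) / (2 * (k ⬝ᵥ k) ^ 2)) = (k ⬝ᵥ b) / (2 * (k ⬝ᵥ k)) := by
    field_simp
  rw [symOuter_mulVec_self, hdot, symOuterSolution, smul_sub, smul_smul, smul_smul,
    mul_inv_cancel₀ hk, one_smul, hcoeff, sub_add_cancel]

variable {𝕜 : Type*} [RCLike 𝕜]

theorem Matrix.star_symOuterSolution_dotProduct {k : n → 𝕜} (hk : star k = k) (b : n → 𝕜) :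
    star (symOuterSolution k b) ⬝ᵥ b
      = (star b ⬝ᵥ b) / (k ⬝ᵥ k) - star (k ⬝ᵥ b) * (k ⬝ᵥ b) / (2 * (k ⬝ᵥ k) ^ 2) := by
  have hkk : star (k ⬝ᵥ k) = k ⬝ᵥ k := by rw [← star_dotProduct_star, hk]
  have hkb : star k ⬝ᵥ b = k ⬝ᵥ b := by rw [hk]
  simp only [symOuterSolution, star_sub, star_smul, sub_dotProduct, smul_dotProduct, star_inv₀,
    star_div₀, star_mul, star_pow, star_ofNat, hkk, hkb, smul_eq_mul]
  ring

theorem Matrix.isLeast_norm_toFrobenius_symOuter_sub_sq {k : n → 𝕜} (hk : star k = k)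
    (hk0 : k ⬝ᵥ k ≠ 0) {B : Matrix n n 𝕜} (hB : Bᵀ = B) :
    IsLeast (Set.range fun v => ‖toFrobenius (symOuter k v - B)‖ ^ 2)
      (‖toFrobenius B‖ ^ 2 - 2 * RCLike.re ((star (B *ᵥ k) ⬝ᵥ B *ᵥ k) / (k ⬝ᵥ k)
        - star (k ⬝ᵥ B *ᵥ k) * (k ⬝ᵥ B *ᵥ k) / (2 * (k ⬝ᵥ k) ^ 2))) := by
  set v₀ := symOuterSolution k (B *ᵥ k)
  have hnormal : (symOuter k v₀ - B) *ᵥ k = 0 := by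
    rw [sub_mulVec, symOuter_symOuterSolution_mulVec hk0, sub_self]
  have hsymm : (symOuter k v₀ - B)ᵀ = symOuter k v₀ - B := by
    rw [transpose_sub, transpose_symOuter, hB]
  have hv₀ : ‖toFrobenius (symOuter k v₀)‖ ^ 2 = 2 * RCLike.re (star v₀ ⬝ᵥ B *ᵥ k) := by
    rw [@norm_sq_eq_re_inner 𝕜, inner_toFrobenius_symOuter hk v₀ (transpose_symOuter k v₀),
      symOuter_symOuterSolution_mulVec hk0]
    simp
  have key := isLeast_norm_sub_sq_of_inner_eq_zero (𝕜 := 𝕜) (toFrobenius ∘ₗ symOuter k)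
    (toFrobenius B) (v₀ := v₀) fun w => by
      rw [LinearMap.comp_apply, LinearMap.comp_apply, ← map_sub,
        inner_toFrobenius_symOuter hk w hsymm, hnormal, dotProduct_zero, mul_zero]
  rw [← star_symOuterSolution_dotProduct hk, ← hv₀]
  simpa only [LinearMap.comp_apply, ← map_sub] using key

end Minimization

/-- Pointwise-in-Fourier minimization: for nonzero `k ∈ ℝᵈ` and complex symmetric `B`,
the minimum over `a ∈ ℂᵈ` of `‖iπ(a⊗k + k⊗a) − B‖²` equals
`‖B‖² − 2|Bk|²/|k|² + |k·Bk|²/|k|⁴`, and it is attained. -/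
theorem stmt9 (d : ℕ) (k : Fin d → ℝ) (hk : k ≠ 0)
    (B : Matrix (Fin d) (Fin d) ℂ) (hB : Bᵀ = B) :
    let nk2 : ℝ := ∑ i, (k i) ^ 2
    let Bk : Fin d → ℂ := B.mulVec fun i => (k i : ℂ)
    let nBk : ℝ := ∑ i, ‖Bk i‖ ^ 2
    let kBk : ℂ := ∑ i, (k i : ℂ) * Bk i
    let frobB : ℝ := ∑ i, ∑ j, ‖B i j‖ ^ 2
    IsLeast {e : ℝ | ∃ a : Fin d → ℂ,
        e = ∑ i, ∑ j, ‖
          (Real.pi : ℂ) * Complex.I * (a i * (k j : ℂ) + (k i : ℂ) * a j) - B i j‖ ^ 2}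
      (frobB - 2 * nBk / nk2 + ‖kBk‖ ^ 2 / nk2 ^ 2) := by
  intro nk2 Bk nBk kBk frobB
  set kc : Fin d → ℂ := fun i => (k i : ℂ)
  have hkc : star kc = kc := by ext i; simp [kc]
  have hnk2 : kc ⬝ᵥ kc = nk2 := by simp [kc, nk2, dotProduct, sq]
  have hnk2_ne : nk2 ≠ 0 := by simpa [nk2, dotProduct, sq] using dotProduct_self_eq_zero.not.2 hk
  have hnBk : star Bk ⬝ᵥ Bk = nBk := by simp [nBk, dotProduct, Complex.conj_mul']
  have hkBk : star (kc ⬝ᵥ Bk) * (kc ⬝ᵥ Bk) = (‖kBk‖ ^ 2 : ℝ) := by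
    push_cast; exact Complex.conj_mul' kBk
  have hπI : (Real.pi : ℂ) * I ≠ 0 := by simp [Real.pi_ne_zero]
  have hscale (a : Fin d → ℂ) : ‖toFrobenius (symOuter kc (((Real.pi : ℂ) * I) • a) - B)‖ ^ 2
      = ∑ i, ∑ j, ‖(Real.pi : ℂ) * I * (a i * (k j : ℂ) + (k i : ℂ) * a j) - B i j‖ ^ 2 := by
    rw [norm_toFrobenius_sq]
    congr! 5 with i _ j _
    simp only [Matrix.sub_apply, symOuter_apply, Pi.smul_apply, smul_eq_mul, kc]
    ring
  have hmin :=
    isLeast_norm_toFrobenius_symOuter_sub_sq hkc (by rw [hnk2]; exact_mod_cast hnk2_ne) hB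
  rw [hnk2, hnBk, hkBk, norm_toFrobenius_sq, ← (MulAction.surjective₀ hπI).range_comp] at hmin
  convert hmin using 1
  · ext e
    simp only [Set.mem_ofPred_eq, Set.mem_range, Function.comp_apply, hscale, eq_comm]
  · simp only [RCLike.re_to_complex, sub_re, div_ofReal_re, ofReal_re, ← ofReal_pow,
      ← ofReal_ofNat, ← ofReal_mul]
    field_simp
    ring
end

section
/- Let g : 𝕋² → ℝ be measurable taking only finitely many values (finite range). Then for all 1 ≤ p ≤ q < ∞ and every translation vector z ∈ 𝕋², the difference Δ_z g(x) := g(x+z) − g(x) satisfies ‖Δ_z g‖_{L^q}^q ≤ C ‖Δ_z g‖_{L^p}^p, where C depends only on the (finite) range of g and on p,q. In particular, if g ∈ B^{1/3}_{p,r} for some p, then g ∈ B^{1/3}_{q,r} for every q ≥ p. -/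
/-! For `p ≤ q` only the boundedness of `|Δ_z g|` matters: on `[0, M]` one has
`a ^ q = a ^ (q - p) * a ^ p ≤ M ^ (q - p) * a ^ p`, and integrating this pointwise bound over the
cube gives the claim with `C = M ^ (q - p)`, where `M` bounds the finite set of differences of
values of `g`. -/

open MeasureTheory

noncomputable section

/-- The unit cube `[0,1)²`, a fundamental domain for `𝕋²`. -/
def Q : Set (ℝ × ℝ) := Set.Ico (0:ℝ) 1 ×ˢ Set.Ico (0:ℝ) 1

theorem Real.rpow_le_rpow_sub_mul_rpow {a M p q : ℝ} (ha : 0 ≤ a) (haM : a ≤ M) (hpq : p ≤ q)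
    (hq : q ≠ 0) : a ^ q ≤ M ^ (q - p) * a ^ p := by
  calc a ^ q = a ^ (q - p) * a ^ p := by
        rw [← Real.rpow_add' ha (by simpa using hq), sub_add_cancel]
    _ ≤ M ^ (q - p) * a ^ p := by gcongr

theorem MeasureTheory.integral_rpow_le_mul_integral_rpow {α : Type*} [MeasurableSpace α]
    {μ : Measure α} [IsFiniteMeasure μ] {f : α → ℝ} (hf : AEStronglyMeasurable f μ) {M p q : ℝ}
    (hf0 : ∀ x, 0 ≤ f x) (hfM : ∀ x, f x ≤ M) (hp : 0 ≤ p) (hpq : p ≤ q) (hq : q ≠ 0) :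
    ∫ x, f x ^ q ∂μ ≤ M ^ (q - p) * ∫ x, f x ^ p ∂μ := by
  have hfp : Integrable (fun x => f x ^ p) μ := by
    refine .of_bound (hf.aemeasurable.pow_const p).aestronglyMeasurable (M ^ p)
      (.of_forall fun x => ?_)
    rw [Real.norm_of_nonneg (Real.rpow_nonneg (hf0 x) p)]
    exact Real.rpow_le_rpow (hf0 x) (hfM x) hp
  rw [← integral_const_mul]
  exact integral_mono_of_nonneg (.of_forall fun x => Real.rpow_nonneg (hf0 x) q) (hfp.const_mul _)
    (.of_forall fun x => Real.rpow_le_rpow_sub_mul_rpow (hf0 x) (hfM x) hpq hq)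

theorem volume_Q : volume Q = 1 := by
  simp [Q, Measure.volume_eq_prod, Measure.prod_prod]

theorem stmt13_general (g : ℝ × ℝ → ℝ) (hmeas : Measurable g)
    (hfin : (Set.range g).Finite) :
    ∀ p q : ℝ, 1 ≤ p → p ≤ q → ∃ C > 0, ∀ z : ℝ × ℝ,
      (∫ x in Q, |g (x.1 + z.1, x.2 + z.2) - g x| ^ q) ≤
        C * ∫ x in Q, |g (x.1 + z.1, x.2 + z.2) - g x| ^ p := by
  intro p q hp hpq
  obtain ⟨M, hM⟩ := Metric.isBounded_iff.1 hfin.isBounded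
  have hdiff : ∀ x y, |g x - g y| ≤ max M 1 := fun x y =>
    (hM ⟨x, rfl⟩ ⟨y, rfl⟩).trans (le_max_left M 1)
  refine ⟨max M 1 ^ (q - p), by positivity, fun z => ?_⟩
  have : IsFiniteMeasure (volume.restrict Q) := isFiniteMeasure_restrict.2 (by simp [volume_Q])
  have hΔ : Measurable fun x : ℝ × ℝ => |g (x.1 + z.1, x.2 + z.2) - g x| := by fun_prop
  exact integral_rpow_le_mul_integral_rpow hΔ.aestronglyMeasurable (fun x => abs_nonneg _)
    (fun x => hdiff _ _) (by linarith) hpq (by linarith)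

/-- For a finite-range periodic `g : 𝕋² → ℝ` and any `1 ≤ p ≤ q < ∞` there is a constant `C`
(depending only on the range of `g` and on `p, q`) with
`‖Δ_z g‖_{L^q}^q ≤ C ‖Δ_z g‖_{L^p}^p` for every translation `z`. -/
theorem stmt13 (g : ℝ × ℝ → ℝ) (hmeas : Measurable g)
    (hper : ∀ x : ℝ × ℝ, g (x.1 + 1, x.2) = g x ∧ g (x.1, x.2 + 1) = g x)
    (hfin : (Set.range g).Finite) :
    ∀ p q : ℝ, 1 ≤ p → p ≤ q → ∃ C > 0, ∀ z : ℝ × ℝ,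
      (∫ x in Q, |g (x.1 + z.1, x.2 + z.2) - g x| ^ q) ≤
        C * ∫ x in Q, |g (x.1 + z.1, x.2 + z.2) - g x| ^ p :=
  stmt13_general g hmeas hfin
end
end
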